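/- arXiv:1107.4073 — 3 statements merged into one kernel-verified Lean document; each statement's English description precedes it below -/
import Mathlib

section
/- For any binary word w of length n, any two maximal executions of the cyclic matching procedure produce the same set of matched pairs; that is, the set of matched pairs of w (and hence the set of unmatched positions) is well-defined, independent of the order in which matchings are performed. -/
/-!
Common definitions: binary words of length `n`, rotations, necklaces (the quotient
poset `Bₙ/Cₙ`), the cyclic matching procedure, Lyndon words, the map `φ`,
crossing pairs, and the words `w_t`.

Throughout, a binary word of length `n` is a function `Fin n → Bool`, where `true`
encodes the letter `1` and `false` the letter `0`.
-/

/-- A binary word of length `n`: `true` encodes the letter `1`, `false` the letter `0`. -/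
abbrev Word (n : ℕ) := Fin n → Bool

variable {n : ℕ} [NeZero n]

/-- The rotation `σ_i`, shifting the letters of `w` cyclically by `i` positions (so the
letter at position `j` of `w` appears at position `j + i` of `rot i w`). -/
def rot (i : Fin n) (w : Word n) : Word n := fun j => w (j - i)

lemma rot_rot (i j : Fin n) (w : Word n) : rot i (rot j w) = rot (j + i) w := by
  funext k
  simp [rot, sub_sub, add_comm]

/-- Two words are equivalent when one is a cyclic rotation of the other. -/
def rotSetoid (n : ℕ) [NeZero n] : Setoid (Word n) where
  r w w' := ∃ i : Fin n, rot i w = w'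
  iseqv := by
    refine ⟨fun w => ⟨0, ?_⟩, ?_, ?_⟩
    · funext j; simp [rot]
    · rintro w w' ⟨i, rfl⟩
      refine ⟨-i, ?_⟩
      rw [rot_rot]
      funext j; simp [rot]
    · rintro w w' w'' ⟨i, rfl⟩ ⟨j, rfl⟩
      exact ⟨i + j, (rot_rot j i w).symm⟩

/-- A necklace: an equivalence class of binary words under cyclic rotation. -/
abbrev Necklace (n : ℕ) [NeZero n] := Quotient (rotSetoid n)

/-- The necklace of a word. -/
def nec (w : Word n) : Necklace n := Quotient.mk (rotSetoid n) w

/-- The number of `1`s in a word. -/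
def wt (w : Word n) : ℕ := (Finset.univ.filter fun i => w i = true).card

/-- The number of `0`s in a word. -/
def zeros (w : Word n) : ℕ := (Finset.univ.filter fun i => w i = false).card

/-- The rank of a necklace: the number of `1`s in any representative. -/
noncomputable def rank (u : Necklace n) : ℕ := wt (Quotient.out u)

/-- The set of positions belonging to some pair of `M`. -/
def matchedPos (M : Finset (Fin n × Fin n)) : Finset (Fin n) :=
  M.image Prod.fst ∪ M.image Prod.snd

/-- `j` is the first position outside `S` encountered strictly after `i` in the cyclic
order `i+1, i+2, …` (indices mod `n`). -/
def FirstAfter (S : Finset (Fin n)) (i j : Fin n) : Prop :=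
  j ∉ S ∧ j ≠ i ∧ ∀ k : Fin n, k ∉ S → k ≠ i → (j - i).val ≤ (k - i).val

/-- One step of the cyclic matching procedure on the word `w`: choose an as-yet-unmatched
position `i` carrying the letter `0` such that the first as-yet-unmatched position `j`
after `i` in cyclic order carries the letter `1`, and declare `{i, j}` a matched pair
(recorded as the ordered pair `(i, j)`, the `0`-position first). -/
inductive MatchStep (w : Word n) :
    Finset (Fin n × Fin n) → Finset (Fin n × Fin n) → Prop
  | step {M : Finset (Fin n × Fin n)} {i j : Fin n}
      (hi : i ∉ matchedPos M) (hw : w i = false)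
      (hj : FirstAfter (matchedPos M) i j) (hj1 : w j = true) :
      MatchStep w M (insert (i, j) M)

/-- A maximal execution of the cyclic matching procedure on `w`, starting from the empty
matching: `M` is reachable from `∅` by matching steps and no further step is possible. -/
def IsMaximalMatching (w : Word n) (M : Finset (Fin n × Fin n)) : Prop :=
  Relation.ReflTransGen (MatchStep w) ∅ M ∧ ∀ M', ¬ MatchStep w M M'

/-- The cyclic matching of `w`: the set of matched pairs produced by (any) maximal
execution of the cyclic matching procedure. -/
noncomputable def matching (w : Word n) : Finset (Fin n × Fin n) :=
  letI := Classical.dec (∃ M, IsMaximalMatching w M)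
  if h : ∃ M, IsMaximalMatching w M then h.choose else ∅

/-- The unmatched positions of `w`: positions belonging to no matched pair. -/
noncomputable def unmatchedPos (w : Word n) : Finset (Fin n) :=
  Finset.univ \ matchedPos (matching w)

/-- Lexicographic comparison of words with respect to the letter order `1 ≺ 0`
(recall `true` encodes `1` and `false` encodes `0`). -/
def lexLE (w w' : Word n) : Prop :=
  w = w' ∨ ∃ i : Fin n, (∀ j : Fin n, j < i → w j = w' j) ∧ w i = true ∧ w' i = false

/-- A word is Lyndon if it is lexicographically smallest among all of its rotations,
with respect to the letter order `1 ≺ 0`. -/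
def IsLyndon (w : Word n) : Prop := ∀ i : Fin n, lexLE w (rot i w)

/-- The Lyndon rearrangement of `w`: its lexicographically smallest rotation. -/
noncomputable def lyndonOf (w : Word n) : Word n :=
  letI := Classical.dec (∃ i : Fin n, IsLyndon (rot i w))
  if h : ∃ i : Fin n, IsLyndon (rot i w) then rot h.choose w else w

/-- Change the letter at the rightmost unmatched position of `w` to `0`. -/
noncomputable def flipTop (w : Word n) : Word n :=
  if h : (unmatchedPos w).Nonempty then
    Function.update w ((unmatchedPos w).max' h) false
  else w

/-- The map `φ`: take the Lyndon rearrangement of a representative and change the letter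
at its rightmost unmatched position (which carries a `1` on the upper half of ranks)
to `0`. -/
noncomputable def phi (u : Necklace n) : Necklace n :=
  nec (flipTop (lyndonOf (Quotient.out u)))

/-- `x` lies strictly inside the cyclic arc running from `i` (exclusive) to `k`
(exclusive), in the cyclic order of positions. -/
def StrictBtw (i x k : Fin n) : Prop :=
  0 < (x - i).val ∧ (x - i).val < (k - i).val

/-- The pairs `{i, k}` and `{j, l}` cross: exactly one of `j, l` lies strictly inside one
of the two cyclic arcs determined by `i` and `k`. -/
def Crosses (i k j l : Fin n) : Prop := Xor' (StrictBtw i j k) (StrictBtw i l k)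

/-- `wT w t` is the word obtained from `w` by changing the letters at the last `t`
unmatched positions of `w` to `0`; that is, if the unmatched positions of `w` are
`p₁ < … < p_m`, the positions `p_{m-t+1}, …, p_m` are changed to `0`. -/
noncomputable def wT (w : Word n) (t : ℕ) : Word n := fun j =>
  if j ∈ unmatchedPos w ∧ ((unmatchedPos w).filter fun k => j ≤ k).card ≤ t then false
  else w j

/-- The order on necklaces (the poset `Bₙ/Cₙ`): `u ≤ v` iff there are representatives
`w` of `u` and `w'` of `v` such that every position carrying `1` in `w` also carries `1`
in `w'`. -/
def nle (u v : Necklace n) : Prop :=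
  ∃ w w' : Word n, nec w = u ∧ nec w' = v ∧ ∀ i, w i = true → w' i = true

/-- The strict order on necklaces. -/
def nlt (u v : Necklace n) : Prop := nle u v ∧ u ≠ v

/-- `v` covers `u` in `Bₙ/Cₙ`: `u < v` and there is no `z` with `u < z < v`. -/
def ncovBy (u v : Necklace n) : Prop := nlt u v ∧ ∀ z, nlt u z → ¬ nlt z v

/-- A chain top: a necklace `v` in the upper half of ranks (`2·rank v ≥ n`) which is not
the image under `φ` of any necklace in the strict upper half of ranks. -/
def IsChainTop (v : Necklace n) : Prop :=
  n ≤ 2 * rank v ∧ ∀ u : Necklace n, n < 2 * rank u → phi u ≠ v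

/-- The `φ`-string below the chain top `v`: the necklaces of the words `w_t`,
`0 ≤ t ≤ m`, where `w` is the Lyndon representative of `v` and `m = 2·rank v − n`. -/
noncomputable def chainOf (v : Necklace n) : Set (Necklace n) :=
  { u | ∃ t ≤ 2 * rank v - n, u = nec (wT (lyndonOf (Quotient.out v)) t) }

/-!
Two matching steps available from the same matching either coincide or involve four distinct
positions, and in the latter case each remains available after the other. The crux is that
distinct unmatched positions `i ≠ i'` cannot have the same first unmatched successor `j`:
walking from `i` one would meet `j` before `i'`, and walking from `i'` one would meet `j`
before `i`, which is impossible on a cycle. This one-step diamond property makes the procedure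
confluent (Church–Rosser), so two terminal matchings reachable from `∅` coincide.
-/

section

omit [NeZero n]

lemma Fin.val_sub_eq_ite (x y : Fin n) :
    (x - y).val = if y ≤ x then x.val - y.val else n + x.val - y.val := by
  split_ifs with h
  · exact Fin.sub_val_of_le h
  · exact Fin.coe_sub_iff_lt.2 (not_le.1 h)

variable {S T : Finset (Fin n)} {i i' j : Fin n}

lemma FirstAfter.left_unique (hi : i ∉ S) (hi' : i' ∉ S) (h : FirstAfter S i j)
    (h' : FirstAfter S i' j) : i = i' := by
  by_contra hii'
  have h₁ := h.2.2 i' hi' (Ne.symm hii')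
  have h₂ := h'.2.2 i hi hii'
  have hji := Fin.val_ne_of_ne h.2.1
  have hji' := Fin.val_ne_of_ne h'.2.1
  have hii'' := Fin.val_ne_of_ne hii'
  rw [Fin.val_sub_eq_ite, Fin.val_sub_eq_ite] at h₁ h₂
  simp only [Fin.le_def] at h₁ h₂
  split_ifs at h₁ h₂ <;> omega

lemma FirstAfter.mono (hST : S ⊆ T) (hj : j ∉ T) (h : FirstAfter S i j) :
    FirstAfter T i j :=
  ⟨hj, h.2.1, fun k hk hki => h.2.2 k (fun hkS => hk (hST hkS)) hki⟩

lemma matchedPos_insert (p : Fin n × Fin n) (M : Finset (Fin n × Fin n)) :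
    matchedPos (insert p M) = insert p.1 (insert p.2 (matchedPos M)) := by
  ext x
  simp only [matchedPos, Finset.image_insert, Finset.mem_union, Finset.mem_insert]
  tauto

variable {w : Word n}

lemma matchStep_insert_of_disjoint {M : Finset (Fin n × Fin n)} {i j i' j' : Fin n}
    (hi : i ∉ matchedPos M) (hwi : w i = false) (hj : FirstAfter (matchedPos M) i j)
    (hwj : w j = true) (hii' : i ≠ i') (hij' : i ≠ j') (hji' : j ≠ i') (hjj' : j ≠ j') :
    MatchStep w (insert (i', j') M) (insert (i, j) (insert (i', j') M)) := by
  have hsub : matchedPos M ⊆ matchedPos (insert (i', j') M) := by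
    rw [matchedPos_insert]
    exact (Finset.subset_insert _ _).trans (Finset.subset_insert _ _)
  refine .step ?_ hwi (hj.mono hsub ?_) hwj <;>
    simp only [matchedPos_insert, Finset.mem_insert, not_or]
  exacts [⟨hii', hij', hi⟩, ⟨hji', hjj', hj.1⟩]

end

lemma FirstAfter.right_unique {S : Finset (Fin n)} {i j j' : Fin n} (h : FirstAfter S i j)
    (h' : FirstAfter S i j') : j = j' :=
  sub_left_inj.1 <| Fin.ext <| le_antisymm (h.2.2 j' h'.1 h'.2.1) (h'.2.2 j h.1 h.2.1)

lemma matchStep_diamond {M M₁ M₂ : Finset (Fin n × Fin n)}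
    (h₁ : MatchStep w M M₁) (h₂ : MatchStep w M M₂) :
    ∃ N, Relation.ReflGen (MatchStep w) M₁ N ∧ Relation.ReflGen (MatchStep w) M₂ N := by
  cases h₁ with | @step i j hi hwi hj hwj => ?_
  cases h₂ with | @step i' j' hi' hwi' hj' hwj' => ?_
  by_cases hii' : i = i'
  · subst hii'
    obtain rfl := hj.right_unique hj'
    exact ⟨_, .refl, .refl⟩
  have hji' : j ≠ i' := ne_of_apply_ne w (by simp [hwj, hwi'])
  have hj'i : j' ≠ i := ne_of_apply_ne w (by simp [hwj', hwi])
  have hjj' : j ≠ j' := fun h => hii' (hj.left_unique hi hi' (h ▸ hj'))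
  refine ⟨insert (i, j) (insert (i', j') M), .single ?_, .single ?_⟩
  · rw [Finset.insert_comm]
    exact matchStep_insert_of_disjoint hi' hwi' hj' hwj' (Ne.symm hii') hji'.symm hj'i
      hjj'.symm
  · exact matchStep_insert_of_disjoint hi hwi hj hwj hii' hj'i.symm hji' hjj'

/-- Any two maximal executions of the cyclic matching procedure on a
binary word `w` of length `n ≥ 1` produce the same set of matched pairs; hence the set of
matched pairs of `w` (and so also its set of unmatched positions) is well-defined,
independent of the order in which matchings are performed. -/
theorem maximalMatching_unique (n : ℕ) [NeZero n] (w : Word n)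
    (M M' : Finset (Fin n × Fin n))
    (hM : IsMaximalMatching w M) (hM' : IsMaximalMatching w M') :
    M = M' := by
  have eq_of_terminal {A B : Finset (Fin n × Fin n)}
      (hAB : Relation.ReflTransGen (MatchStep w) A B) (hA : ∀ C, ¬ MatchStep w A C) : A = B :=
    hAB.cases_head.resolve_right fun ⟨C, hAC, _⟩ => hA C hAC
  obtain ⟨N, hMN, hM'N⟩ := Relation.church_rosser (r := MatchStep w)
    (fun _ _ _ h₁ h₂ => (matchStep_diamond h₁ h₂).imp fun _ hN => ⟨hN.1, hN.2.to_reflTransGen⟩)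
    hM.1 hM'.1
  rw [eq_of_terminal hMN hM.2, eq_of_terminal hM'N hM'.2]
end

section
/- For any binary word w of length n, all unmatched positions of the cyclic matching of w carry the same letter (all carry 0 or all carry 1). In particular: if w has strictly more 1's than 0's, then every position carrying a 0 is matched and the number of unmatched positions (all carrying 1) equals (number of 1's) − (number of 0's); if w has exactly as many 0's as 1's, then every position is matched; and if w has strictly more 0's than 1's, then every position carrying a 1 is matched and the number of unmatched positions (all carrying 0) equals (number of 0's) − (number of 1's). -/
variable {n : ℕ} [NeZero n]

/-!
Every configuration reachable from `∅` consists of pairs `(0-position, 1-position)` no two of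
which share a position, so each letter occurs at exactly `#M` matched positions; this gives the
counts. The matching procedure terminates since each step enlarges the finite set of pairs.
For the dichotomy, suppose a stuck configuration leaves a `0` at `i` and a `1` at `j` unmatched.
The first unmatched position `k` after `i` cannot carry a `1` (a further step would be possible),
so it is an unmatched `0` cyclically closer to `j`; induct on the distance from `i` to `j`.
-/

open Finset Relation

lemma Fin.val_sub_lt_val_sub {n : ℕ} {i j k : Fin n} (hki : k ≠ i)
    (hk : (k - i).val ≤ (j - i).val) : (j - k).val < (j - i).val := by
  have : NeZero n := NeZero.of_pos i.pos
  have hpos : (k - i).val ≠ 0 := Fin.val_ne_zero_iff.mpr (sub_ne_zero.mpr hki)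
  rw [← sub_sub_sub_cancel_right j k i, Fin.sub_val_of_le (Fin.le_iff_val_le_val.mpr hk)]
  omega

section CyclicMatching

variable {n : ℕ} {w : Word n} {M M' : Finset (Fin n × Fin n)}

lemma fst_mem_matchedPos {p : Fin n × Fin n} (hp : p ∈ M) : p.1 ∈ matchedPos M :=
  mem_union_left _ (mem_image_of_mem _ hp)

lemma snd_mem_matchedPos {p : Fin n × Fin n} (hp : p ∈ M) : p.2 ∈ matchedPos M :=
  mem_union_right _ (mem_image_of_mem _ hp)

lemma exists_firstAfter {S : Finset (Fin n)} {i j : Fin n} (hj : j ∉ S) (hji : j ≠ i) :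
    ∃ k, FirstAfter S i k ∧ (k - i).val ≤ (j - i).val := by
  have hjmem : j ∈ univ.filter fun x => x ∉ S ∧ x ≠ i := by simp [hj, hji]
  obtain ⟨k, hk, hmin⟩ := exists_min_image _ (fun x => (x - i).val) ⟨j, hjmem⟩
  simp only [mem_filter, mem_univ, true_and] at hk
  exact ⟨k, ⟨hk.1, hk.2, fun x hx hxi => hmin x (by simp [hx, hxi])⟩, hmin j hjmem⟩

lemma MatchStep.lt (h : MatchStep w M M') : M < M' := by
  cases h with
  | step hi => exact ssubset_insert fun hM => hi (fst_mem_matchedPos hM)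

lemma exists_isMaximalMatching (w : Word n) : ∃ M, IsMaximalMatching w M := by
  obtain ⟨M, hM, hmax⟩ :=
    wellFounded_gt.has_min {M | ReflTransGen (MatchStep w) ∅ M} ⟨∅, .refl⟩
  exact ⟨M, hM, fun M' h => hmax M' (ReflTransGen.tail hM h) h.lt⟩

lemma isMaximalMatching_matching (w : Word n) : IsMaximalMatching w (matching w) := by
  rw [matching, dif_pos (exists_isMaximalMatching w)]
  exact (exists_isMaximalMatching w).choose_spec

lemma letters_of_reachable (h : ReflTransGen (MatchStep w) ∅ M) {p : Fin n × Fin n}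
    (hp : p ∈ M) : w p.1 = false ∧ w p.2 = true := by
  induction h with
  | refl => simp at hp
  | tail _ hstep ih =>
    cases hstep with
    | step _ hi0 _ hj1 =>
      rcases mem_insert.mp hp with rfl | hp
      exacts [⟨hi0, hj1⟩, ih hp]

lemma injOn_of_reachable (h : ReflTransGen (MatchStep w) ∅ M) :
    Set.InjOn Prod.fst (M : Set (Fin n × Fin n)) ∧
      Set.InjOn Prod.snd (M : Set (Fin n × Fin n)) := by
  induction h with
  | refl => simp
  | tail _ hstep ih =>
    cases hstep with
    | @step i j hi _ hj _ =>
      have hnew : (i, j) ∉ _ := fun hM => hi (fst_mem_matchedPos hM)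
      rw [coe_insert, Set.injOn_insert hnew, Set.injOn_insert hnew]
      refine ⟨⟨ih.1, ?_⟩, ⟨ih.2, ?_⟩⟩
      · rintro ⟨q, hq, rfl⟩
        exact hi (fst_mem_matchedPos hq)
      · rintro ⟨q, hq, rfl⟩
        exact hj.1 (snd_mem_matchedPos hq)

lemma card_filter_matchedPos (h : ReflTransGen (MatchStep w) ∅ M) (b : Bool) :
    ((matchedPos M).filter (w · = b)).card = M.card := by
  have hfst : ∀ x ∈ M.image Prod.fst, w x = false :=
    forall_mem_image.mpr fun _ hp => (letters_of_reachable h hp).1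
  have hsnd : ∀ x ∈ M.image Prod.snd, w x = true :=
    forall_mem_image.mpr fun _ hp => (letters_of_reachable h hp).2
  rw [matchedPos, filter_union]
  cases b
  · rw [filter_true_of_mem hfst, filter_false_of_mem (by simpa using hsnd), union_empty,
      card_image_of_injOn (injOn_of_reachable h).1]
  · rw [filter_false_of_mem (by simpa using hfst), filter_true_of_mem hsnd, empty_union,
      card_image_of_injOn (injOn_of_reachable h).2]

lemma card_filter_eq_card_add_unmatched (h : ReflTransGen (MatchStep w) ∅ M) (b : Bool) :
    (univ.filter (w · = b)).card = M.card + ((univ \ matchedPos M).filter (w · = b)).card := by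
  rw [← card_filter_matchedPos h b,
    ← card_union_of_disjoint (disjoint_filter_filter disjoint_sdiff), ← filter_union,
    union_sdiff_of_subset (subset_univ _)]

lemma forall_eq_true_of_stuck (hM : ∀ M', ¬ MatchStep w M M') {j : Fin n}
    (hj : j ∉ matchedPos M) (hj1 : w j = true) {i : Fin n} (hi : i ∉ matchedPos M) :
    w i = true := by
  induction hd : (j - i).val using Nat.strong_induction_on generalizing i with
  | _ d ih =>
  by_contra hi0
  rw [Bool.not_eq_true] at hi0
  have hji : j ≠ i := by
    rintro rfl
    simp [hj1] at hi0
  obtain ⟨k, hk, hkj⟩ := exists_firstAfter hj hji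
  have hk0 : w k = false := by
    by_contra hk1
    exact hM _ (.step hi hi0 hk (by simpa using hk1))
  have hk1 := ih _ (hd ▸ Fin.val_sub_lt_val_sub hk.2.1 hkj) hk.1 rfl
  simp [hk0] at hk1

lemma letter_eq_of_stuck (hM : ∀ M', ¬ MatchStep w M M') {i j : Fin n}
    (hi : i ∉ matchedPos M) (hj : j ∉ matchedPos M) : w i = w j := by
  cases hwj : w j
  · by_contra hwi
    rw [Bool.not_eq_false] at hwi
    simpa [hwj] using forall_eq_true_of_stuck hM hi hwi hj
  · exact forall_eq_true_of_stuck hM hj hwj hi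

end CyclicMatching

section Unmatched

variable {n : ℕ} (w : Word n)

lemma forall_unmatchedPos_eq_true_or_false :
    (∀ p ∈ unmatchedPos w, w p = true) ∨ (∀ p ∈ unmatchedPos w, w p = false) := by
  have hsame : ∀ p ∈ unmatchedPos w, ∀ q ∈ unmatchedPos w, w p = w q := fun p hp q hq =>
    letter_eq_of_stuck (isMaximalMatching_matching w).2 (mem_sdiff.mp hp).2 (mem_sdiff.mp hq).2
  rcases (unmatchedPos w).eq_empty_or_nonempty with hU | ⟨q, hq⟩
  · simp [hU]
  · cases hwq : w q
    exacts [.inr fun p hp => hwq ▸ hsame p hp q hq, .inl fun p hp => hwq ▸ hsame p hp q hq]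

variable {w}

lemma mem_matchedPos_of_forall_unmatchedPos {b : Bool} (h : ∀ p ∈ unmatchedPos w, w p = b)
    {p : Fin n} (hp : w p ≠ b) : p ∈ matchedPos (matching w) := by
  by_contra hm
  exact hp (h p (mem_sdiff.mpr ⟨mem_univ p, hm⟩))

end Unmatched

theorem unmatched_same_letter_and_count_general (n : ℕ) (w : Word n) :
    ((∀ p ∈ unmatchedPos w, w p = true) ∨ (∀ p ∈ unmatchedPos w, w p = false)) ∧
    (zeros w < wt w →
      (∀ p : Fin n, w p = false → p ∈ matchedPos (matching w)) ∧
      (∀ p ∈ unmatchedPos w, w p = true) ∧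
      (unmatchedPos w).card = wt w - zeros w) ∧
    (zeros w = wt w → unmatchedPos w = ∅) ∧
    (wt w < zeros w →
      (∀ p : Fin n, w p = true → p ∈ matchedPos (matching w)) ∧
      (∀ p ∈ unmatchedPos w, w p = false) ∧
      (unmatchedPos w).card = zeros w - wt w) := by
  set U := unmatchedPos w
  have hreach := (isMaximalMatching_matching w).1
  have hzeros : zeros w = (matching w).card + (U.filter (w · = false)).card :=
    card_filter_eq_card_add_unmatched hreach false
  have hwt : wt w = (matching w).card + (U.filter (w · = true)).card :=
    card_filter_eq_card_add_unmatched hreach true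
  have hU : (U.filter (w · = true)).card + (U.filter (w · = false)).card = U.card := by
    simpa using card_filter_add_card_filter_not (s := U) (w · = true)
  have hall₁ : (∀ p ∈ U, w p = true) ↔ (U.filter (w · = false)).card = 0 := by
    simp [filter_eq_empty_iff]
  have hall₀ : (∀ p ∈ U, w p = false) ↔ (U.filter (w · = true)).card = 0 := by
    simp [filter_eq_empty_iff]
  have hdich := forall_unmatchedPos_eq_true_or_false w
  have hcount := hdich.imp hall₁.mp hall₀.mp
  refine ⟨hdich, fun hlt => ?_, fun heq => card_eq_zero.mp (by omega), fun hlt => ?_⟩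
  · have h₁ : ∀ p ∈ U, w p = true := hall₁.mpr (by omega)
    exact ⟨fun p hp => mem_matchedPos_of_forall_unmatchedPos h₁ (by simp [hp]), h₁,
      by omega⟩
  · have h₀ : ∀ p ∈ U, w p = false := hall₀.mpr (by omega)
    exact ⟨fun p hp => mem_matchedPos_of_forall_unmatchedPos h₀ (by simp [hp]), h₀,
      by omega⟩

/-- All unmatched positions of the cyclic matching of `w` carry the same
letter.  If `w` has strictly more `1`s than `0`s, every position carrying a `0` is
matched, all unmatched positions carry a `1`, and their number is `#1s − #0s`; if `w` has
as many `0`s as `1`s, every position is matched; if `w` has strictly more `0`s than `1`s,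
every position carrying a `1` is matched, all unmatched positions carry a `0`, and their
number is `#0s − #1s`. -/
theorem unmatched_same_letter_and_count (n : ℕ) [NeZero n] (w : Word n) :
    ((∀ p ∈ unmatchedPos w, w p = true) ∨ (∀ p ∈ unmatchedPos w, w p = false)) ∧
    (zeros w < wt w →
      (∀ p : Fin n, w p = false → p ∈ matchedPos (matching w)) ∧
      (∀ p ∈ unmatchedPos w, w p = true) ∧
      (unmatchedPos w).card = wt w - zeros w) ∧
    (zeros w = wt w → unmatchedPos w = ∅) ∧
    (wt w < zeros w →
      (∀ p : Fin n, w p = true → p ∈ matchedPos (matching w)) ∧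
      (∀ p ∈ unmatchedPos w, w p = false) ∧
      (unmatchedPos w).card = zeros w - wt w) :=
  unmatched_same_letter_and_count_general n w
end

section
/- Let w be a Lyndon binary word of length n with strictly more 1's than 0's, let i be its rightmost unmatched position (carrying a 1), and let w′ be the word obtained from w by changing position i to 0. Then there exists a starting position j with j = 1 or j > i such that the rotation of w′ beginning at position j is lexicographically minimal among all rotations of w′; in other words, in passing to the Lyndon rearrangement of w′ the changed letter either keeps its position or moves to the right, never to the left. -/
variable {n : ℕ} [NeZero n]

/-!
Let `w'` be a Lyndon word `w` with the letter at `i` set to `0`, and let `0 < j ≤ i`.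
Compare `w'` with its rotation starting at `j`: before position `i - j` the comparison is
the one between `w` and its rotation, which `w` wins or ties; at `i - j` the rotation of `w'`
reads the new `0`, and if `w` has not won earlier it carries a `1` there (the letter of its
rotation, which is `w i`). So no rotation starting in `(0, i]` beats `w'`, and a minimal
rotation can be chosen to start at `0` or after `i`.
-/

lemma rot_zero (w : Word n) : rot 0 w = w := by
  funext j
  simp [rot]

/-- Since `1 ≺ 0` while `true > false`, `lexLE` is the lexicographic order on the negated
word. -/
def lexKey {n : ℕ} (w : Word n) : Lex (Fin n → Bool) := toLex fun i => !w i

lemma lexLE_iff_lexKey_le {n : ℕ} (w w' : Word n) : lexLE w w' ↔ lexKey w ≤ lexKey w' := by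
  rw [le_iff_eq_or_lt, lexLE]
  refine or_congr ?_ (exists_congr fun i => and_congr ?_ ?_)
  · simp [lexKey, funext_iff]
  · simp [lexKey]
  · change _ ↔ (!w i) < (!w' i)
    cases w i <;> cases w' i <;> decide

lemma lexLE_trans {n : ℕ} {u v w : Word n} (huv : lexLE u v) (hvw : lexLE v w) : lexLE u w := by
  rw [lexLE_iff_lexKey_le] at *
  exact huv.trans hvw

lemma exists_minimal_rot (w : Word n) : ∃ k : Fin n, ∀ c, lexLE (rot k w) (rot c w) := by
  simpa only [lexLE_iff_lexKey_le] using Finite.exists_min fun k : Fin n => lexKey (rot k w)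

lemma lexLE_of_lexLE_of_eqOn {n : ℕ} {u v u' v' : Word n} (d : Fin n) (h : lexLE u v)
    (hvd : v d = true) (hu' : ∀ q ≤ d, u' q = u q) (hv' : ∀ q < d, v' q = v q)
    (hv'd : v' d = false) : lexLE u' v' := by
  have agree_below : ∀ e ≤ d, (∀ q < e, u q = v q) → ∀ q < e, u' q = v' q := fun e he hq q hqe =>
    by rw [hu' q (hqe.le.trans he), hv' q (hqe.trans_le he), hq q hqe]
  have witness_d : (∀ q < d, u q = v q) → u d = true → lexLE u' v' := fun hq hud =>
    Or.inr ⟨d, agree_below d le_rfl hq, by rw [hu' d le_rfl, hud], hv'd⟩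
  rcases h with rfl | ⟨e, hbelow, hue, hve⟩
  · exact witness_d (fun _ _ => rfl) hvd
  rcases lt_trichotomy e d with hed | rfl | hde
  · exact Or.inr ⟨e, agree_below e hed.le hbelow, by rw [hu' e hed.le, hue],
      by rw [hv' e hed, hve]⟩
  · exact absurd (hve.symm.trans hvd) Bool.false_ne_true
  · exact witness_d (fun q hq => hbelow q (hq.trans hde)) ((hbelow d hde).trans hvd)

lemma IsLyndon.lexLE_rot_update {w : Word n} (hL : IsLyndon w) {i j : Fin n} (hj : 0 < j)
    (hji : j ≤ i) :
    lexLE (Function.update w i false) (rot (-j) (Function.update w i false)) := by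
  cases hwi : w i
  · rw [← hwi, Function.update_eq_self]
    exact hL (-j)
  have hdi : i - j < i := by
    rw [Fin.lt_def, Fin.sub_val_of_le hji]
    exact Nat.sub_lt (hj.trans_le hji) hj
  refine lexLE_of_lexLE_of_eqOn (i - j) (hL (-j)) ?_ (fun q hq => ?_) (fun q hq => ?_) ?_
  · simp [rot, hwi]
  · exact Function.update_of_ne (hq.trans_lt hdi).ne _ _
  · have hqi : q + j ≠ i := fun h => hq.ne (eq_sub_of_add_eq h)
    simp [rot, Function.update_of_ne hqi]
  · simp [rot]

theorem changed_letter_moves_right_general (n : ℕ) [NeZero n] (w : Word n)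
    (hL : IsLyndon w)
    (i : Fin n)
    (w' : Word n) (hw' : w' = Function.update w i false) :
    ∃ j : Fin n, (j = 0 ∨ i < j) ∧
      ∀ k : Fin n, lexLE (rot (-j) w') (rot k w') := by
  obtain ⟨k, hk⟩ := exists_minimal_rot w'
  by_cases hstart : -k = 0 ∨ i < -k
  · exact ⟨-k, hstart, by simpa only [neg_neg] using hk⟩
  obtain ⟨hk0, hki⟩ := not_or.1 hstart
  have hw'_le : lexLE w' (rot k w') := by
    simpa only [hw', neg_neg] using
      hL.lexLE_rot_update (Fin.pos_iff_ne_zero.2 hk0) (not_lt.1 hki)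
  refine ⟨0, Or.inl rfl, fun c => ?_⟩
  rw [neg_zero, rot_zero]
  exact lexLE_trans hw'_le (hk c)

/-- Let `w` be a Lyndon word with strictly more `1`s than `0`s, let `i`
be its rightmost unmatched position (carrying a `1`), and let `w'` be obtained from `w`
by changing position `i` to `0`.  Then there is a starting position `j` with `j` the
first position or `j > i` such that the rotation of `w'` beginning at position `j` is
lexicographically minimal among all rotations of `w'`: in passing to the Lyndon
rearrangement of `w'`, the changed letter keeps its position or moves right, never
left. -/
theorem changed_letter_moves_right (n : ℕ) [NeZero n] (w : Word n)
    (hL : IsLyndon w) (hmaj : zeros w < wt w)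
    (hne : (unmatchedPos w).Nonempty)
    (i : Fin n) (hi : i = (unmatchedPos w).max' hne)
    (w' : Word n) (hw' : w' = Function.update w i false) :
    ∃ j : Fin n, (j = 0 ∨ i < j) ∧
      ∀ k : Fin n, lexLE (rot (-j) w') (rot k w') :=
  changed_letter_moves_right_general n w hL i w' hw'
end
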